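/- Let k be a field of characteristic p, G a finite group, and M a kG-module such that Hom_{kG}(M, k) is finite dimensional. Then M has a submodule M'' such that M/M'' is finite dimensional, all composition factors of M/M'' are isomorphic to the trivial module k, and Hom_{kG}(M'', k) = 0. -/

import Mathlib

/-!
Let `J` be the augmentation ideal of `kG`. As `kG` is finite dimensional, the powers of `J`
stabilize, `J * J ^ n = J ^ n`, and we take `M'' = J ^ n M`, so that `M'' = J M''`.
A `G`-invariant functional `f` satisfies `f (a • x) = ε(a) f(x)`, so it kills `J M''`, i.e.
all of `M''`. A simple subquotient `S` of `M / M''` has `J S = 0`, since `J S = S` would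
give `J ^ n S = S`; hence `G` acts trivially on it. Finally, the dual of `M / J M` embeds into
`Hom_{kG}(M, k)`, so `M / J M` is finite dimensional; lifting a basis gives a finitely generated
`E` with `M = E + J M`, hence `M = E + J ^ n M`, and `E` is finite dimensional because `kG` is.
-/

open Submodule

section Ring

variable {A M : Type*} [Ring A] [AddCommGroup M] [Module A M]

theorem Ideal.exists_mul_pow_eq [IsArtinianRing A] (I : Ideal A) [I.IsTwoSided] :
    ∃ n : ℕ, I * I ^ n = I ^ n := by
  obtain ⟨n, hn⟩ := IsArtinian.monotone_stabilizes ⟨(I ^ ·), fun _ _ ↦ Ideal.pow_le_pow_right⟩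
  exact ⟨n, by rw [← Ideal.IsTwoSided.pow_succ]; exact (hn _ n.le_succ).symm⟩

theorem Submodule.pow_smul_eq_self {I : Ideal A} {N : Submodule A M} (h : I • N = N) :
    ∀ n : ℕ, I ^ n • N = N
  | 0 => by rw [Submodule.pow_zero, Submodule.one_smul]
  | n + 1 => by
    rw [Submodule.pow_succ, ← Ideal.smul_eq_mul, Submodule.smul_assoc, h, pow_smul_eq_self h n]

theorem IsSimpleModule.smul_top_eq_bot_of_pow_smul_top_eq_bot [IsSimpleModule A M]
    {I : Ideal A} {n : ℕ} (h : I ^ n • (⊤ : Submodule A M) = ⊥) :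
    I • (⊤ : Submodule A M) = ⊥ := by
  refine (eq_bot_or_eq_top (I • ⊤)).resolve_right fun htop ↦ ?_
  exact bot_ne_top (h.symm.trans (pow_smul_eq_self htop n))

theorem Submodule.smul_top_eq_bot_of_smul_top_le {I : Ideal A} {P : Submodule A M}
    (hP : I • ⊤ ≤ P) (Q : Submodule A M) :
    I • (⊤ : Submodule A (Q ⧸ P.comap Q.subtype)) = ⊥ := by
  refine le_bot_iff.mp (smul_le.mpr fun w hw z _ ↦ ?_)
  obtain ⟨q, rfl⟩ := Submodule.Quotient.mk_surjective _ z
  rw [mem_bot, ← Submodule.Quotient.mk_smul, Submodule.Quotient.mk_eq_zero, mem_comap]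
  exact hP (smul_mem_smul hw mem_top)

theorem Submodule.sup_pow_smul_top_eq_top {I : Ideal A} {E : Submodule A M}
    (h : I • ⊤ ⊔ E = ⊤) : ∀ n : ℕ, I ^ n • ⊤ ⊔ E = ⊤
  | 0 => by rw [Submodule.pow_zero, Submodule.one_smul, top_sup_eq]
  | n + 1 => by
    refine eq_top_iff.mpr ?_
    calc ⊤ = I ^ n • (I • ⊤ ⊔ E) ⊔ E := by rw [h, sup_pow_smul_top_eq_top h n]
      _ ≤ I ^ (n + 1) • ⊤ ⊔ E := by
        rw [smul_sup, Submodule.pow_succ, ← Ideal.smul_eq_mul, Submodule.smul_assoc, sup_assoc]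
        exact sup_le_sup_left (sup_le_iff.mpr ⟨smul_le_right, le_rfl⟩) _

theorem Submodule.exists_fg_sup_eq_top (N : Submodule A M) [Module.Finite A (M ⧸ N)] :
    ∃ E : Submodule A M, E.FG ∧ N ⊔ E = ⊤ := by
  obtain ⟨s, hs⟩ := Module.Finite.fg_top (R := A) (M := M ⧸ N)
  have hN := N.mkQ_surjective
  refine ⟨span A (Function.surjInv hN '' s), fg_span (s.finite_toSet.image _), ?_⟩
  rw [← map_mkQ_eq_top, map_span, Set.image_image]
  simp only [Function.surjInv_eq hN, Set.image_id', hs]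

end Ring

section Algebra

variable {k A M : Type*} [CommRing k] [Ring A] [Algebra k A] [AddCommGroup M] [Module k M]
  [Module A M] [IsScalarTower k A M]

theorem Submodule.finite_quotient_of_sup_eq_top {N E : Submodule k M} [Module.Finite k E]
    (h : N ⊔ E = ⊤) : Module.Finite k (M ⧸ N) := by
  refine Module.Finite.of_surjective (N.mkQ ∘ₗ E.subtype) ?_
  rw [← LinearMap.range_eq_top, LinearMap.range_comp, range_subtype, map_mkQ_eq_top, h]

theorem Submodule.finite_quotient_pow_smul_top [Module.Finite k A] (I : Ideal A)
    (h : Module.Finite k (M ⧸ (I • ⊤ : Submodule A M).restrictScalars k)) (n : ℕ) :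
    Module.Finite k (M ⧸ (I ^ n • ⊤ : Submodule A M).restrictScalars k) := by
  have : Module.Finite A (M ⧸ (I • ⊤ : Submodule A M)) :=
    have := Module.Finite.equiv (Quotient.restrictScalarsEquiv k (I • ⊤ : Submodule A M))
    Module.Finite.of_restrictScalars_finite k A _
  obtain ⟨E, hE, hsup⟩ := exists_fg_sup_eq_top (I • ⊤ : Submodule A M)
  have : Module.Finite A E := Module.Finite.iff_fg.mpr hE
  have : Module.Finite k (E.restrictScalars k) := (Module.Finite.trans A E : Module.Finite k E)
  refine finite_quotient_of_sup_eq_top (E := E.restrictScalars k) ?_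
  rw [← restrictScalars_sup, sup_pow_smul_top_eq_top hsup n, restrictScalars_top]

end Algebra

namespace MonoidAlgebra

variable (k G : Type*) [Field k] [Group G]

noncomputable def augmentation : MonoidAlgebra k G →ₐ[k] k := lift k k G 1

noncomputable def augmentationIdeal : Ideal (MonoidAlgebra k G) := RingHom.ker (augmentation k G)

variable {k G}

instance [Finite G] : IsArtinianRing (MonoidAlgebra k G) :=
  isArtinian_of_tower k inferInstance

instance : (augmentationIdeal k G).IsTwoSided :=
  inferInstanceAs (RingHom.ker _).IsTwoSided

theorem of_sub_one_mem_augmentationIdeal (g : G) : of k G g - 1 ∈ augmentationIdeal k G := by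
  simp [augmentationIdeal, augmentation]

variable {M : Type*} [AddCommGroup M] [Module (MonoidAlgebra k G) M]

theorem of_smul_sub_mem_augmentationIdeal_smul_top (g : G) (m : M) :
    of k G g • m - m ∈ augmentationIdeal k G • (⊤ : Submodule (MonoidAlgebra k G) M) := by
  simpa [sub_smul] using smul_mem_smul (of_sub_one_mem_augmentationIdeal g) (mem_top (x := m))

theorem of_smul_eq_self_of_augmentationIdeal_smul_top_eq_bot
    (h : augmentationIdeal k G • (⊤ : Submodule (MonoidAlgebra k G) M) = ⊥) (g : G) (m : M) :
    of k G g • m = m :=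
  sub_eq_zero.mp <| (mem_bot _).mp <| h ▸ of_smul_sub_mem_augmentationIdeal_smul_top g m

variable [Module k M] [IsScalarTower k (MonoidAlgebra k G) M]

theorem apply_smul_of_invariant {f : M →ₗ[k] k} (hf : ∀ (g : G) (m : M), f (of k G g • m) = f m)
    (a : MonoidAlgebra k G) (m : M) : f (a • m) = augmentation k G a * f m := by
  induction a using MonoidAlgebra.induction_on with
  | of g => rw [hf]; simp [augmentation]
  | add a b ha hb => simp [add_smul, ha, hb, add_mul]
  | smul c a ha => simp [smul_assoc, ha, mul_assoc]

theorem eq_zero_of_invariant_of_le_augmentationIdeal_smul {N : Submodule (MonoidAlgebra k G) M}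
    (hN : N ≤ augmentationIdeal k G • N) (f : N →ₗ[k] k)
    (hf : ∀ (g : G) (x : N), f (of k G g • x) = f x) : f = 0 := by
  ext ⟨x, hx⟩
  induction hN hx using smul_induction_on' with
  | smul u hu y hy =>
    have : (⟨u • y, N.smul_mem u hy⟩ : N) = u • ⟨y, hy⟩ := rfl
    rw [this, apply_smul_of_invariant hf, RingHom.mem_ker.mp hu, zero_mul, LinearMap.zero_apply]
  | add x hxJ y hyJ ihx ihy =>
    simp only [LinearMap.zero_apply] at ihx ihy ⊢
    exact (map_add f ⟨x, smul_le_right hxJ⟩ ⟨y, smul_le_right hyJ⟩).trans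
      (by rw [ihx, ihy, add_zero])

theorem finite_quotient_augmentationIdeal_smul_top
    (hfin : ∃ s : Finset (M →ₗ[k] k), ∀ f : M →ₗ[k] k,
      (∀ (g : G) (m : M), f (of k G g • m) = f m) → f ∈ span k (s : Set (M →ₗ[k] k))) :
    Module.Finite k
      (M ⧸ (augmentationIdeal k G • ⊤ : Submodule (MonoidAlgebra k G) M).restrictScalars k) := by
  obtain ⟨s, hs⟩ := hfin
  set N := (augmentationIdeal k G • ⊤ : Submodule (MonoidAlgebra k G) M).restrictScalars k
  have hrange : LinearMap.range N.mkQ.dualMap ≤ span k (s : Set (M →ₗ[k] k)) := by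
    rintro _ ⟨φ, rfl⟩
    exact hs _ fun g m ↦ congrArg φ <|
      (Submodule.Quotient.eq N).mpr (of_smul_sub_mem_augmentationIdeal_smul_top g m)
  have := Submodule.finiteDimensional_of_le hrange
  have : Module.Finite k (Module.Dual k (M ⧸ N)) := Module.Finite.equiv
    (LinearEquiv.ofInjective _ (LinearMap.dualMap_injective_of_surjective N.mkQ_surjective)).symm
  exact Module.finite_dual_iff k |>.mp this

end MonoidAlgebra

theorem stmt18_general (k : Type) [Field k]
    (G : Type) [Group G] [Finite G]
    (M : Type) [AddCommGroup M] [Module k M] [Module (MonoidAlgebra k G) M]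
    [IsScalarTower k (MonoidAlgebra k G) M]
    (hfin : ∃ s : Finset (M →ₗ[k] k), ∀ f : M →ₗ[k] k,
      (∀ (g : G) (m : M), f (MonoidAlgebra.of k G g • m) = f m) →
      f ∈ Submodule.span k (s : Set (M →ₗ[k] k))) :
    ∃ M'' : Submodule (MonoidAlgebra k G) M,
      FiniteDimensional k (M ⧸ M''.restrictScalars k) ∧
      (∀ (P Q : Submodule (MonoidAlgebra k G) M), M'' ≤ P → P ≤ Q →
        IsSimpleModule (MonoidAlgebra k G) (↥Q ⧸ P.comap Q.subtype) →
        ∀ (g : G) (x : ↥Q ⧸ P.comap Q.subtype), MonoidAlgebra.of k G g • x = x) ∧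
      (∀ f : ↥M'' →ₗ[k] k,
        (∀ (g : G) (x : ↥M''), f (MonoidAlgebra.of k G g • x) = f x) → f = 0) := by
  open MonoidAlgebra in
  set J := augmentationIdeal k G
  obtain ⟨n, hn⟩ := J.exists_mul_pow_eq
  refine ⟨J ^ n • ⊤, ?_, fun P Q hP _ _ ↦ ?_, ?_⟩
  · exact J.finite_quotient_pow_smul_top (finite_quotient_augmentationIdeal_smul_top hfin) n
  · exact of_smul_eq_self_of_augmentationIdeal_smul_top_eq_bot <|
      IsSimpleModule.smul_top_eq_bot_of_pow_smul_top_eq_bot (smul_top_eq_bot_of_smul_top_le hP Q)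
  · refine eq_zero_of_invariant_of_le_augmentationIdeal_smul (le_of_eq ?_)
    rw [← Submodule.smul_assoc, Ideal.smul_eq_mul, hn]

/-- Let `k` be a field of characteristic `p`, `G` a finite group, and `M` a
`kG`-module such that `Hom_{kG}(M, k)` (the space of `G`-equivariant linear functionals,
`k` the trivial module) is finite dimensional (encoded: all such functionals lie in the
span of finitely many).  Then `M` has a `kG`-submodule `M''` such that `M/M''` is finite
dimensional, all composition factors of `M/M''` (simple subquotients `Q/P` with
`M'' ≤ P ≤ Q ≤ M`) carry the trivial `G`-action (are isomorphic to `k`), and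
`Hom_{kG}(M'', k) = 0`. -/
theorem stmt18 (k : Type) [Field k] (p : ℕ) [Fact p.Prime] [CharP k p]
    (G : Type) [Group G] [Finite G]
    (M : Type) [AddCommGroup M] [Module k M] [Module (MonoidAlgebra k G) M]
    [IsScalarTower k (MonoidAlgebra k G) M]
    (hfin : ∃ s : Finset (M →ₗ[k] k), ∀ f : M →ₗ[k] k,
      (∀ (g : G) (m : M), f (MonoidAlgebra.of k G g • m) = f m) →
      f ∈ Submodule.span k (s : Set (M →ₗ[k] k))) :
    ∃ M'' : Submodule (MonoidAlgebra k G) M,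
      FiniteDimensional k (M ⧸ M''.restrictScalars k) ∧
      (∀ (P Q : Submodule (MonoidAlgebra k G) M), M'' ≤ P → P ≤ Q →
        IsSimpleModule (MonoidAlgebra k G) (↥Q ⧸ P.comap Q.subtype) →
        ∀ (g : G) (x : ↥Q ⧸ P.comap Q.subtype), MonoidAlgebra.of k G g • x = x) ∧
      (∀ f : ↥M'' →ₗ[k] k,
        (∀ (g : G) (x : ↥M''), f (MonoidAlgebra.of k G g • x) = f x) → f = 0) :=
  stmt18_general k G M hfin
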